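/- arXiv:1904.11717 — 6 statements merged into one kernel-verified Lean document; each statement's English description precedes it below -/
import Mathlib

section
/- Unbiasedness of the similar–unlabeled (SU) risk (Proposition 1): for every measurable f : ℝ^d → ℝ satisfying the integrability assumption, R(f) = π_S·∫ (L̃(f(x)) + L̃(f(x')))/2 dμ_S(x,x') + ∫ L(f(x),−1) dμ_U(x). -/
open MeasureTheory

/-- For a probability measure `ν`, the integral of `(g p.1 + g p.2)/2` over `μ.prod ν`
equals the average of the integrals, assuming integrability. -/
lemma integral_pair_avg {α : Type*} [MeasurableSpace α] (μ ν : Measure α)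
    [IsProbabilityMeasure μ] [IsProbabilityMeasure ν] (g : α → ℝ)
    (hgμ : Integrable g μ) (hgν : Integrable g ν) :
    ∫ p : α × α, (g p.1 + g p.2) / 2 ∂(μ.prod ν)
      = (∫ x, g x ∂μ + ∫ x, g x ∂ν) / 2 := by
  have h1 : Integrable (fun p : α × α => g p.1) (μ.prod ν) := by
    have := hgμ.mul_prod (integrable_const (1 : ℝ)) (ν := ν)
    simpa using this
  have h2 : Integrable (fun p : α × α => g p.2) (μ.prod ν) := by
    have := (integrable_const (1 : ℝ) (μ := μ)).mul_prod hgν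
    simpa using this
  simp only [div_eq_mul_inv]
  rw [integral_mul_const, integral_add h1 h2, integral_fun_fst, integral_fun_snd]
  simp

/-- Unbiasedness of the similar–unlabeled (SU) risk (Proposition 1). -/
theorem su_risk_unbiased {d : ℕ} (hd : 1 ≤ d)
    (μp μm : Measure (Fin d → ℝ)) [IsProbabilityMeasure μp] [IsProbabilityMeasure μm]
    (πp πm : ℝ) (hπp : πp ∈ Set.Ioo (0 : ℝ) 1) (hπm : πm = 1 - πp) (hne : πp ≠ πm)
    (πS : ℝ) (hπS : πS = πp ^ 2 + πm ^ 2)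
    (μU : Measure (Fin d → ℝ))
    (hμU : μU = ENNReal.ofReal πp • μp + ENNReal.ofReal πm • μm)
    (μS : Measure ((Fin d → ℝ) × (Fin d → ℝ)))
    (hμS : μS = ENNReal.ofReal (πp ^ 2 / πS) • (μp.prod μp)
        + ENNReal.ofReal (πm ^ 2 / πS) • (μm.prod μm))
    (ℓ : ℝ → ℝ → ℝ) (hℓ : ∀ z t, 0 ≤ ℓ z t)
    (L : ℝ → ℝ → ℝ) (hL : ∀ z t, L z t = (πp * ℓ z t - πm * ℓ z (-t)) / (πp - πm))
    (Lt : ℝ → ℝ) (hLt : ∀ z, Lt z = (ℓ z 1 - ℓ z (-1)) / (πp - πm))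
    (f : (Fin d → ℝ) → ℝ) (hf : Measurable f)
    (hintp : ∀ t ∈ ({1, -1} : Set ℝ), Integrable (fun x => ℓ (f x) t) μp)
    (hintm : ∀ t ∈ ({1, -1} : Set ℝ), Integrable (fun x => ℓ (f x) t) μm) :
    πp * ∫ x, ℓ (f x) 1 ∂μp + πm * ∫ x, ℓ (f x) (-1) ∂μm
      = πS * ∫ p, (Lt (f p.1) + Lt (f p.2)) / 2 ∂μS
        + ∫ x, L (f x) (-1) ∂μU := by
  obtain ⟨hπp0, hπp1⟩ := hπp
  have hπm0 : 0 < πm := by rw [hπm]; linarith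
  have hΔ : πp - πm ≠ 0 := sub_ne_zero.mpr hne
  have hπS0 : 0 < πS := by rw [hπS]; positivity
  -- integrabilities of the basic losses
  have ip1 := hintp 1 (by simp)
  have ipm := hintp (-1) (by simp)
  have im1 := hintm 1 (by simp)
  have imm := hintm (-1) (by simp)
  -- integrability of Lt ∘ f
  have iLtp : Integrable (fun x => Lt (f x)) μp := by
    simp only [hLt]; exact (ip1.sub ipm).div_const _
  have iLtm : Integrable (fun x => Lt (f x)) μm := by
    simp only [hLt]; exact (im1.sub imm).div_const _
  -- integrability of L(·, -1) ∘ f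
  have iLp : Integrable (fun x => L (f x) (-1)) μp := by
    simp only [hL, neg_neg]
    exact ((ipm.const_mul πp).sub (ip1.const_mul πm)).div_const _
  have iLm : Integrable (fun x => L (f x) (-1)) μm := by
    simp only [hL, neg_neg]
    exact ((imm.const_mul πp).sub (im1.const_mul πm)).div_const _
  -- unlabeled integral
  have hU : ∫ x, L (f x) (-1) ∂μU
      = πp * ∫ x, L (f x) (-1) ∂μp + πm * ∫ x, L (f x) (-1) ∂μm := by
    rw [hμU, integral_add_measure (iLp.smul_measure ENNReal.ofReal_ne_top)
      (iLm.smul_measure ENNReal.ofReal_ne_top), integral_smul_measure,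
      integral_smul_measure, ENNReal.toReal_ofReal hπp0.le, ENNReal.toReal_ofReal hπm0.le,
      smul_eq_mul, smul_eq_mul]
  -- similar-pair integral
  have hS : ∫ p, (Lt (f p.1) + Lt (f p.2)) / 2 ∂μS
      = (πp ^ 2 / πS) * ∫ x, Lt (f x) ∂μp + (πm ^ 2 / πS) * ∫ x, Lt (f x) ∂μm := by
    have hpp := integral_pair_avg μp μp (fun x => Lt (f x)) iLtp iLtp
    have hmm := integral_pair_avg μm μm (fun x => Lt (f x)) iLtm iLtm
    have ipp : Integrable (fun p : (Fin d → ℝ) × (Fin d → ℝ) =>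
        (Lt (f p.1) + Lt (f p.2)) / 2) (μp.prod μp) := by
      refine Integrable.div_const (Integrable.add ?_ ?_) 2
      · simpa using iLtp.mul_prod (integrable_const (1 : ℝ) (μ := μp))
      · simpa using (integrable_const (1 : ℝ) (μ := μp)).mul_prod iLtp
    have imm' : Integrable (fun p : (Fin d → ℝ) × (Fin d → ℝ) =>
        (Lt (f p.1) + Lt (f p.2)) / 2) (μm.prod μm) := by
      refine Integrable.div_const (Integrable.add ?_ ?_) 2
      · simpa using iLtm.mul_prod (integrable_const (1 : ℝ) (μ := μm))
      · simpa using (integrable_const (1 : ℝ) (μ := μm)).mul_prod iLtm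
    rw [hμS, integral_add_measure (ipp.smul_measure ENNReal.ofReal_ne_top)
      (imm'.smul_measure ENNReal.ofReal_ne_top), integral_smul_measure,
      integral_smul_measure, ENNReal.toReal_ofReal (by positivity),
      ENNReal.toReal_ofReal (by positivity), smul_eq_mul, smul_eq_mul, hpp, hmm]
    ring
  -- integrals of corrected losses in terms of base integrals
  have hLtp : ∫ x, Lt (f x) ∂μp
      = (∫ x, ℓ (f x) 1 ∂μp - ∫ x, ℓ (f x) (-1) ∂μp) / (πp - πm) := by
    simp only [hLt]
    rw [integral_div, integral_sub ip1 ipm]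
  have hLtm : ∫ x, Lt (f x) ∂μm
      = (∫ x, ℓ (f x) 1 ∂μm - ∫ x, ℓ (f x) (-1) ∂μm) / (πp - πm) := by
    simp only [hLt]
    rw [integral_div, integral_sub im1 imm]
  have hLp : ∫ x, L (f x) (-1) ∂μp
      = (πp * ∫ x, ℓ (f x) (-1) ∂μp - πm * ∫ x, ℓ (f x) 1 ∂μp) / (πp - πm) := by
    simp only [hL, neg_neg]
    rw [integral_div, integral_sub (ipm.const_mul πp) (ip1.const_mul πm),
      integral_const_mul, integral_const_mul]
  have hLm : ∫ x, L (f x) (-1) ∂μm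
      = (πp * ∫ x, ℓ (f x) (-1) ∂μm - πm * ∫ x, ℓ (f x) 1 ∂μm) / (πp - πm) := by
    simp only [hL, neg_neg]
    rw [integral_div, integral_sub (imm.const_mul πp) (im1.const_mul πm),
      integral_const_mul, integral_const_mul]
  rw [hU, hS, hLtp, hLtm, hLp, hLm]
  field_simp
  ring
end

section
/- Unbiasedness of the dissimilar–unlabeled (DU) risk (Theorem 1, first identity): for every measurable f : ℝ^d → ℝ satisfying the integrability assumption, R(f) = π_D·∫ −(L̃(f(x)) + L̃(f(x')))/2 dμ_D(x,x') + ∫ L(f(x),+1) dμ_U(x). -/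
open MeasureTheory
open scoped ENNReal

/-- Unbiasedness of the dissimilar–unlabeled (DU) risk (Theorem 1, first identity). -/
theorem du_risk_unbiased {d : ℕ} (hd : 1 ≤ d)
    (μp μm : Measure (Fin d → ℝ)) [IsProbabilityMeasure μp] [IsProbabilityMeasure μm]
    (πp πm : ℝ) (hπp : πp ∈ Set.Ioo (0 : ℝ) 1) (hπm : πm = 1 - πp) (hne : πp ≠ πm)
    (πD : ℝ) (hπD : πD = 2 * πp * πm)
    (μU : Measure (Fin d → ℝ))
    (hμU : μU = ENNReal.ofReal πp • μp + ENNReal.ofReal πm • μm)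
    (μD : Measure ((Fin d → ℝ) × (Fin d → ℝ)))
    (hμD : μD = ((1 : ℝ≥0∞) / 2) • (μp.prod μm) + ((1 : ℝ≥0∞) / 2) • (μm.prod μp))
    (ℓ : ℝ → ℝ → ℝ) (hℓ : ∀ z t, 0 ≤ ℓ z t)
    (L : ℝ → ℝ → ℝ) (hL : ∀ z t, L z t = (πp * ℓ z t - πm * ℓ z (-t)) / (πp - πm))
    (Lt : ℝ → ℝ) (hLt : ∀ z, Lt z = (ℓ z 1 - ℓ z (-1)) / (πp - πm))
    (f : (Fin d → ℝ) → ℝ) (hf : Measurable f)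
    (hintp : ∀ t ∈ ({1, -1} : Set ℝ), Integrable (fun x => ℓ (f x) t) μp)
    (hintm : ∀ t ∈ ({1, -1} : Set ℝ), Integrable (fun x => ℓ (f x) t) μm) :
    πp * ∫ x, ℓ (f x) 1 ∂μp + πm * ∫ x, ℓ (f x) (-1) ∂μm
      = πD * ∫ p, -((Lt (f p.1) + Lt (f p.2)) / 2) ∂μD
        + ∫ x, L (f x) 1 ∂μU := by
  obtain ⟨hπp0, hπp1⟩ := hπp
  have hπm0 : 0 < πm := by rw [hπm]; linarith
  have hsub : πp - πm ≠ 0 := sub_ne_zero.mpr hne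
  have hap : Integrable (fun x => ℓ (f x) 1) μp := hintp 1 (by simp)
  have hbp : Integrable (fun x => ℓ (f x) (-1)) μp := hintp (-1) (by simp)
  have ham : Integrable (fun x => ℓ (f x) 1) μm := hintm 1 (by simp)
  have hbm : Integrable (fun x => ℓ (f x) (-1)) μm := hintm (-1) (by simp)
  set a := ∫ x, ℓ (f x) 1 ∂μp with ha
  set b := ∫ x, ℓ (f x) (-1) ∂μp with hb
  set c := ∫ x, ℓ (f x) 1 ∂μm with hc
  set e := ∫ x, ℓ (f x) (-1) ∂μm with he
  have hLtf : (fun x => Lt (f x)) = fun x => (ℓ (f x) 1 - ℓ (f x) (-1)) / (πp - πm) := by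
    funext x; exact hLt (f x)
  have hgp : Integrable (fun x => Lt (f x)) μp := by
    rw [hLtf]; exact (hap.sub hbp).div_const _
  have hgm : Integrable (fun x => Lt (f x)) μm := by
    rw [hLtf]; exact (ham.sub hbm).div_const _
  have hIp : ∫ x, Lt (f x) ∂μp = (a - b) / (πp - πm) := by
    rw [hLtf, integral_div, integral_sub hap hbp]
  have hIm : ∫ x, Lt (f x) ∂μm = (c - e) / (πp - πm) := by
    rw [hLtf, integral_div, integral_sub ham hbm]
  -- product-measure computations
  have keyInt : ∀ (μ ν : Measure (Fin d → ℝ)) [IsProbabilityMeasure μ] [IsProbabilityMeasure ν],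
      Integrable (fun x => Lt (f x)) μ → Integrable (fun x => Lt (f x)) ν →
      Integrable (fun p : (Fin d → ℝ) × (Fin d → ℝ) => -((Lt (f p.1) + Lt (f p.2)) / 2))
        (μ.prod ν) := by
    intro μ ν _ _ h1 h2
    have i1 : Integrable (fun p : (Fin d → ℝ) × (Fin d → ℝ) => Lt (f p.1)) (μ.prod ν) := by
      have := h1.mul_prod (integrable_const (1 : ℝ) (μ := ν))
      simpa using this
    have i2 : Integrable (fun p : (Fin d → ℝ) × (Fin d → ℝ) => Lt (f p.2)) (μ.prod ν) := by
      have := (integrable_const (1 : ℝ) (μ := μ)).mul_prod h2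
      simpa using this
    exact ((i1.add i2).div_const 2).neg
  have key : ∀ (μ ν : Measure (Fin d → ℝ)) [IsProbabilityMeasure μ] [IsProbabilityMeasure ν],
      Integrable (fun x => Lt (f x)) μ → Integrable (fun x => Lt (f x)) ν →
      ∫ p, -((Lt (f p.1) + Lt (f p.2)) / 2) ∂(μ.prod ν)
        = -((∫ x, Lt (f x) ∂μ + ∫ x, Lt (f x) ∂ν) / 2) := by
    intro μ ν _ _ h1 h2
    have i1 : Integrable (fun p : (Fin d → ℝ) × (Fin d → ℝ) => Lt (f p.1)) (μ.prod ν) := by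
      have := h1.mul_prod (integrable_const (1 : ℝ) (μ := ν))
      simpa using this
    have i2 : Integrable (fun p : (Fin d → ℝ) × (Fin d → ℝ) => Lt (f p.2)) (μ.prod ν) := by
      have := (integrable_const (1 : ℝ) (μ := μ)).mul_prod h2
      simpa using this
    have h3 : ∫ p, -((Lt (f p.1) + Lt (f p.2)) / 2) ∂(μ.prod ν)
        = -((∫ p, Lt (f p.1) ∂(μ.prod ν) + ∫ p, Lt (f p.2) ∂(μ.prod ν)) / 2) := by
      rw [integral_neg, integral_div, integral_add i1 i2]
    rw [h3, integral_fun_fst (f := fun x => Lt (f x)),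
      integral_fun_snd (f := fun x => Lt (f x))]
    simp
  have hhalf : ((1 : ℝ≥0∞) / 2) ≠ ⊤ := by norm_num
  have hDint : ∫ p, -((Lt (f p.1) + Lt (f p.2)) / 2) ∂μD
      = -(((a - b) / (πp - πm) + (c - e) / (πp - πm)) / 2) := by
    rw [hμD, integral_add_measure
        ((keyInt μp μm hgp hgm).smul_measure hhalf)
        ((keyInt μm μp hgm hgp).smul_measure hhalf),
      integral_smul_measure, integral_smul_measure,
      key μp μm hgp hgm, key μm μp hgm hgp, hIp, hIm]
    rw [ENNReal.toReal_div]
    norm_num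
    ring
  -- unlabeled part
  have hLf : (fun x => L (f x) 1)
      = fun x => (πp * ℓ (f x) 1 - πm * ℓ (f x) (-1)) / (πp - πm) := by
    funext x; simpa using hL (f x) 1
  have hLp : Integrable (fun x => L (f x) 1) μp := by
    rw [hLf]; exact (((hap.const_mul πp)).sub (hbp.const_mul πm)).div_const _
  have hLm : Integrable (fun x => L (f x) 1) μm := by
    rw [hLf]; exact (((ham.const_mul πp)).sub (hbm.const_mul πm)).div_const _
  have hUp : ∫ x, L (f x) 1 ∂μp = (πp * a - πm * b) / (πp - πm) := by
    rw [hLf, integral_div, integral_sub (hap.const_mul πp) (hbp.const_mul πm),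
      integral_const_mul, integral_const_mul]
  have hUm : ∫ x, L (f x) 1 ∂μm = (πp * c - πm * e) / (πp - πm) := by
    rw [hLf, integral_div, integral_sub (ham.const_mul πp) (hbm.const_mul πm),
      integral_const_mul, integral_const_mul]
  have hUint : ∫ x, L (f x) 1 ∂μU
      = πp * ((πp * a - πm * b) / (πp - πm)) + πm * ((πp * c - πm * e) / (πp - πm)) := by
    rw [hμU, integral_add_measure
        (hLp.smul_measure ENNReal.ofReal_ne_top)
        (hLm.smul_measure ENNReal.ofReal_ne_top),
      integral_smul_measure, integral_smul_measure, hUp, hUm,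
      ENNReal.toReal_ofReal hπp0.le, ENNReal.toReal_ofReal hπm0.le]
    simp [smul_eq_mul]
  rw [hDint, hUint, hπD]
  field_simp
  ring
end

section
/- Unbiasedness of the similar–dissimilar (SD) risk (Theorem 1, second identity): for every measurable f : ℝ^d → ℝ satisfying the integrability assumption, R(f) = π_S·∫ (L(f(x),+1) + L(f(x'),+1))/2 dμ_S(x,x') + π_D·∫ (L(f(x),−1) + L(f(x'),−1))/2 dμ_D(x,x'). -/
/-!
Over a product of probability measures the pair average `(g x + g x') / 2` integrates to the
mean of the two marginal integrals of `g`. Hence the SD risk equals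
`π₊² E₊ L(f,+1) + π₋² E₋ L(f,+1) + π₊ π₋ (E₊ L(f,-1) + E₋ L(f,-1))`; expanding `L`, the
`E₋ ℓ(f,+1)` and `E₊ ℓ(f,-1)` terms cancel, and the remaining coefficients are
`π₊ (π₊ + π₋) = π₊` and `π₋ (π₊ + π₋) = π₋`.
-/

open MeasureTheory
open scoped ENNReal

section PairAverage

variable {α : Type*} [MeasurableSpace α] {μ ν : Measure α} {g : α → ℝ}

lemma integrable_pair_average_prod [IsFiniteMeasure μ] [IsFiniteMeasure ν]
    (hμ : Integrable g μ) (hν : Integrable g ν) :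
    Integrable (fun p : α × α => (g p.1 + g p.2) / 2) (μ.prod ν) :=
  ((hμ.comp_fst ν).add (hν.comp_snd μ)).div_const 2

lemma integral_pair_average_prod [IsProbabilityMeasure μ] [IsProbabilityMeasure ν]
    (hμ : Integrable g μ) (hν : Integrable g ν) :
    ∫ p : α × α, (g p.1 + g p.2) / 2 ∂(μ.prod ν) = (∫ x, g x ∂μ + ∫ x, g x ∂ν) / 2 := by
  rw [integral_div, integral_add (hμ.comp_fst ν) (hν.comp_snd μ), integral_fun_fst,
    integral_fun_snd]
  simp

lemma integral_smul_add_smul_measure {c c' : ℝ≥0∞} (hc : c ≠ ∞) (hc' : c' ≠ ∞)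
    {h : α → ℝ} (hμ : Integrable h μ) (hν : Integrable h ν) :
    ∫ x, h x ∂(c • μ + c' • ν) = c.toReal * ∫ x, h x ∂μ + c'.toReal * ∫ x, h x ∂ν := by
  rw [integral_add_measure (hμ.smul_measure hc) (hν.smul_measure hc'), integral_smul_measure,
    integral_smul_measure, smul_eq_mul, smul_eq_mul]

lemma integral_pair_average_similar [IsProbabilityMeasure μ] [IsProbabilityMeasure ν]
    {a b s : ℝ} (ha : 0 ≤ a) (hb : 0 ≤ b) (hs : 0 < s)
    (hμ : Integrable g μ) (hν : Integrable g ν) :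
    s * ∫ p : α × α, (g p.1 + g p.2) / 2
        ∂(ENNReal.ofReal (a / s) • μ.prod μ + ENNReal.ofReal (b / s) • ν.prod ν)
      = a * ∫ x, g x ∂μ + b * ∫ x, g x ∂ν := by
  rw [integral_smul_add_smul_measure ENNReal.ofReal_ne_top ENNReal.ofReal_ne_top
      (integrable_pair_average_prod hμ hμ) (integrable_pair_average_prod hν hν),
    integral_pair_average_prod hμ hμ, integral_pair_average_prod hν hν,
    ENNReal.toReal_ofReal (by positivity), ENNReal.toReal_ofReal (by positivity)]
  field_simp
  ring

lemma integral_pair_average_dissimilar [IsProbabilityMeasure μ] [IsProbabilityMeasure ν]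
    (hμ : Integrable g μ) (hν : Integrable g ν) :
    ∫ p : α × α, (g p.1 + g p.2) / 2 ∂((1 / 2 : ℝ≥0∞) • μ.prod ν + (1 / 2 : ℝ≥0∞) • ν.prod μ)
      = (∫ x, g x ∂μ + ∫ x, g x ∂ν) / 2 := by
  rw [integral_smul_add_smul_measure (by simp) (by simp)
      (integrable_pair_average_prod hμ hν) (integrable_pair_average_prod hν hμ),
    integral_pair_average_prod hμ hν, integral_pair_average_prod hν hμ]
  simp only [one_div, ENNReal.toReal_inv, ENNReal.toReal_ofNat]
  ring

end PairAverage

section CorrectedLoss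

variable {α : Type*} [MeasurableSpace α] {μ : Measure α} {ℓ L : ℝ → ℝ → ℝ} {πp πm : ℝ}
  (hL : ∀ z t, L z t = (πp * ℓ z t - πm * ℓ z (-t)) / (πp - πm)) {f : α → ℝ} {t : ℝ}
include hL

lemma integrable_corrected_loss (ht : Integrable (fun x => ℓ (f x) t) μ)
    (hnt : Integrable (fun x => ℓ (f x) (-t)) μ) :
    Integrable (fun x => L (f x) t) μ := by
  simp only [hL]
  exact ((ht.const_mul πp).sub (hnt.const_mul πm)).div_const _

lemma integral_corrected_loss (ht : Integrable (fun x => ℓ (f x) t) μ)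
    (hnt : Integrable (fun x => ℓ (f x) (-t)) μ) :
    ∫ x, L (f x) t ∂μ
      = (πp * ∫ x, ℓ (f x) t ∂μ - πm * ∫ x, ℓ (f x) (-t) ∂μ) / (πp - πm) := by
  simp only [hL]
  rw [integral_div, integral_sub (ht.const_mul πp) (hnt.const_mul πm), integral_const_mul,
    integral_const_mul]

end CorrectedLoss

theorem sd_risk_unbiased_general {d : ℕ}
    (μp μm : Measure (Fin d → ℝ)) [IsProbabilityMeasure μp] [IsProbabilityMeasure μm]
    (πp πm : ℝ) (hπm : πm = 1 - πp) (hne : πp ≠ πm)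
    (πS πD : ℝ) (hπS : πS = πp ^ 2 + πm ^ 2) (hπD : πD = 2 * πp * πm)
    (μS : Measure ((Fin d → ℝ) × (Fin d → ℝ)))
    (hμS : μS = ENNReal.ofReal (πp ^ 2 / πS) • (μp.prod μp)
        + ENNReal.ofReal (πm ^ 2 / πS) • (μm.prod μm))
    (μD : Measure ((Fin d → ℝ) × (Fin d → ℝ)))
    (hμD : μD = ((1 : ℝ≥0∞) / 2) • (μp.prod μm) + ((1 : ℝ≥0∞) / 2) • (μm.prod μp))
    (ℓ : ℝ → ℝ → ℝ)
    (L : ℝ → ℝ → ℝ) (hL : ∀ z t, L z t = (πp * ℓ z t - πm * ℓ z (-t)) / (πp - πm))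
    (f : (Fin d → ℝ) → ℝ)
    (hintp : ∀ t ∈ ({1, -1} : Set ℝ), Integrable (fun x => ℓ (f x) t) μp)
    (hintm : ∀ t ∈ ({1, -1} : Set ℝ), Integrable (fun x => ℓ (f x) t) μm) :
    πp * ∫ x, ℓ (f x) 1 ∂μp + πm * ∫ x, ℓ (f x) (-1) ∂μm
      = πS * ∫ p, (L (f p.1) 1 + L (f p.2) 1) / 2 ∂μS
        + πD * ∫ p, (L (f p.1) (-1) + L (f p.2) (-1)) / 2 ∂μD := by
  simp only [Set.mem_insert_iff, Set.mem_singleton_iff, forall_eq_or_imp, forall_eq]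
    at hintp hintm
  obtain ⟨hp₁, hp₂⟩ := hintp
  obtain ⟨hm₁, hm₂⟩ := hintm
  have hp₁' : Integrable (fun x => ℓ (f x) (-(-1))) μp := by rwa [neg_neg]
  have hm₁' : Integrable (fun x => ℓ (f x) (-(-1))) μm := by rwa [neg_neg]
  have hπS0 : 0 < πS := by nlinarith [sq_nonneg (2 * πp - 1)]
  have hS : πS * ∫ p, (L (f p.1) 1 + L (f p.2) 1) / 2 ∂μS
      = πp ^ 2 * ∫ x, L (f x) 1 ∂μp + πm ^ 2 * ∫ x, L (f x) 1 ∂μm :=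
    hμS ▸ integral_pair_average_similar (sq_nonneg _) (sq_nonneg _) hπS0
      (integrable_corrected_loss hL hp₁ hp₂) (integrable_corrected_loss hL hm₁ hm₂)
  have hD : ∫ p, (L (f p.1) (-1) + L (f p.2) (-1)) / 2 ∂μD
      = (∫ x, L (f x) (-1) ∂μp + ∫ x, L (f x) (-1) ∂μm) / 2 :=
    hμD ▸ integral_pair_average_dissimilar
      (integrable_corrected_loss hL hp₂ hp₁') (integrable_corrected_loss hL hm₂ hm₁')
  rw [hS, hD, integral_corrected_loss hL hp₁ hp₂, integral_corrected_loss hL hm₁ hm₂,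
    integral_corrected_loss hL hp₂ hp₁', integral_corrected_loss hL hm₂ hm₁', neg_neg, hπD]
  have hδ : πp - πm ≠ 0 := sub_ne_zero.mpr hne
  field_simp
  subst hπm
  ring

/-- Unbiasedness of the similar–dissimilar (SD) risk (Theorem 1, second identity). -/
theorem sd_risk_unbiased {d : ℕ} (hd : 1 ≤ d)
    (μp μm : Measure (Fin d → ℝ)) [IsProbabilityMeasure μp] [IsProbabilityMeasure μm]
    (πp πm : ℝ) (hπp : πp ∈ Set.Ioo (0 : ℝ) 1) (hπm : πm = 1 - πp) (hne : πp ≠ πm)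
    (πS πD : ℝ) (hπS : πS = πp ^ 2 + πm ^ 2) (hπD : πD = 2 * πp * πm)
    (μS : Measure ((Fin d → ℝ) × (Fin d → ℝ)))
    (hμS : μS = ENNReal.ofReal (πp ^ 2 / πS) • (μp.prod μp)
        + ENNReal.ofReal (πm ^ 2 / πS) • (μm.prod μm))
    (μD : Measure ((Fin d → ℝ) × (Fin d → ℝ)))
    (hμD : μD = ((1 : ℝ≥0∞) / 2) • (μp.prod μm) + ((1 : ℝ≥0∞) / 2) • (μm.prod μp))
    (ℓ : ℝ → ℝ → ℝ) (hℓ : ∀ z t, 0 ≤ ℓ z t)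
    (L : ℝ → ℝ → ℝ) (hL : ∀ z t, L z t = (πp * ℓ z t - πm * ℓ z (-t)) / (πp - πm))
    (f : (Fin d → ℝ) → ℝ) (hf : Measurable f)
    (hintp : ∀ t ∈ ({1, -1} : Set ℝ), Integrable (fun x => ℓ (f x) t) μp)
    (hintm : ∀ t ∈ ({1, -1} : Set ℝ), Integrable (fun x => ℓ (f x) t) μm) :
    πp * ∫ x, ℓ (f x) 1 ∂μp + πm * ∫ x, ℓ (f x) (-1) ∂μm
      = πS * ∫ p, (L (f p.1) 1 + L (f p.2) 1) / 2 ∂μS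
        + πD * ∫ p, (L (f p.1) (-1) + L (f p.2) (-1)) / 2 ∂μD :=
  sd_risk_unbiased_general μp μm πp πm hπm hne πS πD hπS hπD μS hμS μD hμD ℓ L hL f hintp hintm
end

section
/- Convexity of the corrected losses: suppose z ↦ ℓ(z,t) is convex on ℝ for each t ∈ {+1,−1} and ℓ(z,+1) − ℓ(z,−1) = −z for all z ∈ ℝ. Then (i) L̃(z) = −z/(π₊ − π₋) for all z (so L̃ is affine); (ii) L(z,+1) = ℓ(z,+1) − (π₋/(π₊ − π₋))·z and L(z,−1) = ℓ(z,+1) + (π₊/(π₊ − π₋))·z for all z; consequently z ↦ L(z,+1) and z ↦ L(z,−1) are convex functions on ℝ. -/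
/-!
Under `ℓ(z,+1) − ℓ(z,−1) = −z`, eliminating `ℓ(z,−1)` from the corrected losses leaves
`ℓ(z,+1)` plus a linear term in `z`, and adding a linear function preserves convexity.
-/

section CorrectedLoss

variable {p m a b z : ℝ}

lemma div_sub_mul_eq_sub_mul_of_sub_eq_neg (hpm : p - m ≠ 0) (hab : a - b = -z) :
    (p * a - m * b) / (p - m) = a - m / (p - m) * z := by
  field_simp
  linear_combination m * hab

lemma div_sub_mul_eq_add_mul_of_sub_eq_neg (hpm : p - m ≠ 0) (hab : a - b = -z) :
    (p * b - m * a) / (p - m) = a + p / (p - m) * z := by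
  field_simp
  linear_combination -p * hab

end CorrectedLoss

lemma ConvexOn.add_const_mul {s : Set ℝ} {f : ℝ → ℝ} (hf : ConvexOn ℝ s f) (c : ℝ) :
    ConvexOn ℝ s (fun z => f z + c * z) :=
  hf.add ((LinearMap.mul ℝ ℝ c).convexOn hf.1)

theorem corrected_losses_convex_general
    (πp πm : ℝ) (hne : πp ≠ πm)
    (ℓ : ℝ → ℝ → ℝ)
    (L : ℝ → ℝ → ℝ) (hL : ∀ z t, L z t = (πp * ℓ z t - πm * ℓ z (-t)) / (πp - πm))
    (Lt : ℝ → ℝ) (hLt : ∀ z, Lt z = (ℓ z 1 - ℓ z (-1)) / (πp - πm))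
    (hconv : ∀ t ∈ ({1, -1} : Set ℝ), ConvexOn ℝ Set.univ (fun z => ℓ z t))
    (hodd : ∀ z : ℝ, ℓ z 1 - ℓ z (-1) = -z) :
    (∀ z : ℝ, Lt z = -z / (πp - πm))
      ∧ (∀ z : ℝ, L z 1 = ℓ z 1 - (πm / (πp - πm)) * z)
      ∧ (∀ z : ℝ, L z (-1) = ℓ z 1 + (πp / (πp - πm)) * z)
      ∧ ConvexOn ℝ Set.univ (fun z => L z 1)
      ∧ ConvexOn ℝ Set.univ (fun z => L z (-1)) := by
  have hd : πp - πm ≠ 0 := sub_ne_zero.mpr hne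
  have hpos (z : ℝ) : L z 1 = ℓ z 1 - (πm / (πp - πm)) * z := by
    rw [hL]
    exact div_sub_mul_eq_sub_mul_of_sub_eq_neg hd (hodd z)
  have hneg (z : ℝ) : L z (-1) = ℓ z 1 + (πp / (πp - πm)) * z := by
    rw [hL, neg_neg]
    exact div_sub_mul_eq_add_mul_of_sub_eq_neg hd (hodd z)
  have hconv₁ := hconv 1 (by simp)
  refine ⟨fun z => by rw [hLt, hodd], hpos, hneg, ?_, ?_⟩
  · simpa only [hpos, sub_eq_add_neg, neg_mul] using hconv₁.add_const_mul (-(πm / (πp - πm)))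
  · simpa only [hneg] using hconv₁.add_const_mul (πp / (πp - πm))

/-- Convexity of the corrected losses under the linear-odd condition
`ℓ(z,+1) − ℓ(z,−1) = −z`. -/
theorem corrected_losses_convex
    (πp πm : ℝ) (hπp : πp ∈ Set.Ioo (0 : ℝ) 1) (hπm : πm = 1 - πp) (hne : πp ≠ πm)
    (ℓ : ℝ → ℝ → ℝ)
    (L : ℝ → ℝ → ℝ) (hL : ∀ z t, L z t = (πp * ℓ z t - πm * ℓ z (-t)) / (πp - πm))
    (Lt : ℝ → ℝ) (hLt : ∀ z, Lt z = (ℓ z 1 - ℓ z (-1)) / (πp - πm))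
    (hconv : ∀ t ∈ ({1, -1} : Set ℝ), ConvexOn ℝ Set.univ (fun z => ℓ z t))
    (hodd : ∀ z : ℝ, ℓ z 1 - ℓ z (-1) = -z) :
    (∀ z : ℝ, Lt z = -z / (πp - πm))
      ∧ (∀ z : ℝ, L z 1 = ℓ z 1 - (πm / (πp - πm)) * z)
      ∧ (∀ z : ℝ, L z (-1) = ℓ z 1 + (πp / (πp - πm)) * z)
      ∧ ConvexOn ℝ Set.univ (fun z => L z 1)
      ∧ ConvexOn ℝ Set.univ (fun z => L z (-1)) :=
  corrected_losses_convex_general πp πm hne ℓ L hL Lt hLt hconv hodd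
end

section
/- Pointwise expansion of the combined SDU risk (Appendix identity): for all real numbers γ₁, γ₂, γ₃ and every measurable f : ℝ^d → ℝ satisfying the integrability assumption, γ₁·R_SU(f) + γ₂·R_DU(f) + γ₃·R_SD(f) = (π_S/(π₊ − π₋))·∫ [ (γ₁ + γ₃·π₊)·ℓ(f(x),+1) − (γ₁ + γ₃·π₋)·ℓ(f(x),−1) ] dp̃_S(x) + (π_D/(π₊ − π₋))·∫ [ −(γ₂ + γ₃·π₋)·ℓ(f(x),+1) + (γ₂ + γ₃·π₊)·ℓ(f(x),−1) ] dp̃_D(x) + (1/(π₊ − π₋))·∫ [ (γ₂·π₊ − γ₁·π₋)·ℓ(f(x),+1) + (γ₁·π₊ − γ₂·π₋)·ℓ(f(x),−1) ] dμ_U(x). -/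
open MeasureTheory
open scoped ENNReal

private lemma mix_integral {α : Type*} [MeasurableSpace α] {μ ν : Measure α}
    (c c' : ℝ≥0∞) (hc : c ≠ ⊤) (hc' : c' ≠ ⊤) {g : α → ℝ}
    (hμ : Integrable g μ) (hν : Integrable g ν) :
    ∫ x, g x ∂(c • μ + c' • ν) = c.toReal * ∫ x, g x ∂μ + c'.toReal * ∫ x, g x ∂ν := by
  rw [integral_add_measure (hμ.smul_measure hc) (hν.smul_measure hc'),
    integral_smul_measure, integral_smul_measure]
  simp [smul_eq_mul]

private lemma my_int_fst {α : Type*} [MeasurableSpace α] {μ ν : Measure α}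
    [IsProbabilityMeasure μ] [IsProbabilityMeasure ν] {g : α → ℝ} (hμ : Integrable g μ) :
    Integrable (fun p : α × α => g p.1) (μ.prod ν) := by
  have hmap : Measure.map Prod.fst (μ.prod ν) = μ := by simp
  have ham : AEStronglyMeasurable g (Measure.map Prod.fst (μ.prod ν)) := by
    rw [hmap]; exact hμ.aestronglyMeasurable
  exact (integrable_map_measure ham measurable_fst.aemeasurable).1 (by rwa [hmap])

private lemma my_int_snd {α : Type*} [MeasurableSpace α] {μ ν : Measure α}
    [IsProbabilityMeasure μ] [IsProbabilityMeasure ν] {g : α → ℝ} (hν : Integrable g ν) :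
    Integrable (fun p : α × α => g p.2) (μ.prod ν) := by
  have hmap : Measure.map Prod.snd (μ.prod ν) = ν := by simp
  have ham : AEStronglyMeasurable g (Measure.map Prod.snd (μ.prod ν)) := by
    rw [hmap]; exact hν.aestronglyMeasurable
  exact (integrable_map_measure ham measurable_snd.aemeasurable).1 (by rwa [hmap])

private lemma pair_integrable {α : Type*} [MeasurableSpace α] {μ ν : Measure α}
    [IsProbabilityMeasure μ] [IsProbabilityMeasure ν] {g : α → ℝ}
    (hμ : Integrable g μ) (hν : Integrable g ν) :
    Integrable (fun p : α × α => (g p.1 + g p.2) / 2) (μ.prod ν) :=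
  ((my_int_fst hμ).add (my_int_snd hν)).div_const 2

private lemma pair_integral_eq {α : Type*} [MeasurableSpace α] {μ ν : Measure α}
    [IsProbabilityMeasure μ] [IsProbabilityMeasure ν] {g : α → ℝ}
    (hμ : Integrable g μ) (hν : Integrable g ν) :
    ∫ p, (g p.1 + g p.2) / 2 ∂(μ.prod ν) = ((∫ x, g x ∂μ) + ∫ x, g x ∂ν) / 2 := by
  have e1 : ∫ p, g p.1 ∂(μ.prod ν) = ∫ x, g x ∂μ := by
    have hmap : Measure.map Prod.fst (μ.prod ν) = μ := by simp
    have ham : AEStronglyMeasurable g (Measure.map Prod.fst (μ.prod ν)) := by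
      rw [hmap]; exact hμ.aestronglyMeasurable
    conv_rhs => rw [← hmap]
    rw [integral_map measurable_fst.aemeasurable ham]
  have e2 : ∫ p, g p.2 ∂(μ.prod ν) = ∫ x, g x ∂ν := by
    have hmap : Measure.map Prod.snd (μ.prod ν) = ν := by simp
    have ham : AEStronglyMeasurable g (Measure.map Prod.snd (μ.prod ν)) := by
      rw [hmap]; exact hν.aestronglyMeasurable
    conv_rhs => rw [← hmap]
    rw [integral_map measurable_snd.aemeasurable ham]
  rw [integral_div, integral_add (my_int_fst hμ) (my_int_snd hν), e1, e2]

set_option maxHeartbeats 1000000 in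
/-- Pointwise expansion of the combined SDU risk (Appendix identity). -/
theorem sdu_risk_pointwise_expansion {d : ℕ} (hd : 1 ≤ d)
    (μp μm : Measure (Fin d → ℝ)) [IsProbabilityMeasure μp] [IsProbabilityMeasure μm]
    (πp πm : ℝ) (hπp : πp ∈ Set.Ioo (0 : ℝ) 1) (hπm : πm = 1 - πp) (hne : πp ≠ πm)
    (πS πD : ℝ) (hπS : πS = πp ^ 2 + πm ^ 2) (hπD : πD = 2 * πp * πm)
    (μU : Measure (Fin d → ℝ))
    (hμU : μU = ENNReal.ofReal πp • μp + ENNReal.ofReal πm • μm)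
    (μS : Measure ((Fin d → ℝ) × (Fin d → ℝ)))
    (hμS : μS = ENNReal.ofReal (πp ^ 2 / πS) • (μp.prod μp)
        + ENNReal.ofReal (πm ^ 2 / πS) • (μm.prod μm))
    (μD : Measure ((Fin d → ℝ) × (Fin d → ℝ)))
    (hμD : μD = ((1 : ℝ≥0∞) / 2) • (μp.prod μm) + ((1 : ℝ≥0∞) / 2) • (μm.prod μp))
    (ptS ptD : Measure (Fin d → ℝ))
    (hptS : ptS = ENNReal.ofReal (πp ^ 2 / πS) • μp + ENNReal.ofReal (πm ^ 2 / πS) • μm)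
    (hptD : ptD = ((1 : ℝ≥0∞) / 2) • μp + ((1 : ℝ≥0∞) / 2) • μm)
    (ℓ : ℝ → ℝ → ℝ) (hℓ : ∀ z t, 0 ≤ ℓ z t)
    (L : ℝ → ℝ → ℝ) (hL : ∀ z t, L z t = (πp * ℓ z t - πm * ℓ z (-t)) / (πp - πm))
    (Lt : ℝ → ℝ) (hLt : ∀ z, Lt z = (ℓ z 1 - ℓ z (-1)) / (πp - πm))
    (RSU RDU RSD : ((Fin d → ℝ) → ℝ) → ℝ)
    (hRSU : ∀ f : (Fin d → ℝ) → ℝ,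
      RSU f = πS * ∫ p, (Lt (f p.1) + Lt (f p.2)) / 2 ∂μS + ∫ x, L (f x) (-1) ∂μU)
    (hRDU : ∀ f : (Fin d → ℝ) → ℝ,
      RDU f = πD * ∫ p, -((Lt (f p.1) + Lt (f p.2)) / 2) ∂μD + ∫ x, L (f x) 1 ∂μU)
    (hRSD : ∀ f : (Fin d → ℝ) → ℝ,
      RSD f = πS * ∫ p, (L (f p.1) 1 + L (f p.2) 1) / 2 ∂μS
        + πD * ∫ p, (L (f p.1) (-1) + L (f p.2) (-1)) / 2 ∂μD)
    (γ₁ γ₂ γ₃ : ℝ)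
    (f : (Fin d → ℝ) → ℝ) (hf : Measurable f)
    (hintp : ∀ t ∈ ({1, -1} : Set ℝ), Integrable (fun x => ℓ (f x) t) μp)
    (hintm : ∀ t ∈ ({1, -1} : Set ℝ), Integrable (fun x => ℓ (f x) t) μm) :
    γ₁ * RSU f + γ₂ * RDU f + γ₃ * RSD f
      = (πS / (πp - πm)) * ∫ x,
            ((γ₁ + γ₃ * πp) * ℓ (f x) 1 - (γ₁ + γ₃ * πm) * ℓ (f x) (-1)) ∂ptS
        + (πD / (πp - πm)) * ∫ x,
            (-(γ₂ + γ₃ * πm) * ℓ (f x) 1 + (γ₂ + γ₃ * πp) * ℓ (f x) (-1)) ∂ptD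
        + (1 / (πp - πm)) * ∫ x,
            ((γ₂ * πp - γ₁ * πm) * ℓ (f x) 1 + (γ₁ * πp - γ₂ * πm) * ℓ (f x) (-1)) ∂μU := by

  obtain ⟨hπp0, hπp1⟩ := hπp
  have hπm0 : 0 < πm := by rw [hπm]; linarith
  have hΔ : πp - πm ≠ 0 := sub_ne_zero.mpr hne
  have hπS0 : 0 < πS := by rw [hπS]; positivity
  have hhalf : ((1 : ℝ≥0∞) / 2) ≠ ⊤ := by simp
  have hhalfR : ((1 : ℝ≥0∞) / 2).toReal = 1 / 2 := by simp
  have hp1 : Integrable (fun x => ℓ (f x) 1) μp := hintp 1 (by simp)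
  have hp2 : Integrable (fun x => ℓ (f x) (-1)) μp := hintp (-1) (by simp)
  have hm1 : Integrable (fun x => ℓ (f x) 1) μm := hintm 1 (by simp)
  have hm2 : Integrable (fun x => ℓ (f x) (-1)) μm := hintm (-1) (by simp)
  -- integrability of the corrected losses
  have hLtp : Integrable (fun x => Lt (f x)) μp := by
    simp only [hLt]; exact (hp1.sub hp2).div_const _
  have hLtm : Integrable (fun x => Lt (f x)) μm := by
    simp only [hLt]; exact (hm1.sub hm2).div_const _
  have hL1p : Integrable (fun x => L (f x) 1) μp := by
    simp only [hL]; exact ((hp1.const_mul _).sub (hp2.const_mul _)).div_const _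
  have hL1m : Integrable (fun x => L (f x) 1) μm := by
    simp only [hL]; exact ((hm1.const_mul _).sub (hm2.const_mul _)).div_const _
  have hLm1p : Integrable (fun x => L (f x) (-1)) μp := by
    simp only [hL, neg_neg]; exact ((hp2.const_mul _).sub (hp1.const_mul _)).div_const _
  have hLm1m : Integrable (fun x => L (f x) (-1)) μm := by
    simp only [hL, neg_neg]; exact ((hm2.const_mul _).sub (hm1.const_mul _)).div_const _
  -- values of the corrected-loss integrals
  have iLtp : ∫ x, Lt (f x) ∂μp
      = ((∫ x, ℓ (f x) 1 ∂μp) - ∫ x, ℓ (f x) (-1) ∂μp) / (πp - πm) := by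
    simp only [hLt]; rw [integral_div, integral_sub hp1 hp2]
  have iLtm : ∫ x, Lt (f x) ∂μm
      = ((∫ x, ℓ (f x) 1 ∂μm) - ∫ x, ℓ (f x) (-1) ∂μm) / (πp - πm) := by
    simp only [hLt]; rw [integral_div, integral_sub hm1 hm2]
  have iL1p : ∫ x, L (f x) 1 ∂μp
      = (πp * ∫ x, ℓ (f x) 1 ∂μp - πm * ∫ x, ℓ (f x) (-1) ∂μp) / (πp - πm) := by
    simp only [hL]
    rw [integral_div, integral_sub (hp1.const_mul _) (hp2.const_mul _),
      integral_const_mul, integral_const_mul]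
  have iL1m : ∫ x, L (f x) 1 ∂μm
      = (πp * ∫ x, ℓ (f x) 1 ∂μm - πm * ∫ x, ℓ (f x) (-1) ∂μm) / (πp - πm) := by
    simp only [hL]
    rw [integral_div, integral_sub (hm1.const_mul _) (hm2.const_mul _),
      integral_const_mul, integral_const_mul]
  have iLm1p : ∫ x, L (f x) (-1) ∂μp
      = (πp * ∫ x, ℓ (f x) (-1) ∂μp - πm * ∫ x, ℓ (f x) 1 ∂μp) / (πp - πm) := by
    simp only [hL, neg_neg]
    rw [integral_div, integral_sub (hp2.const_mul _) (hp1.const_mul _),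
      integral_const_mul, integral_const_mul]
  have iLm1m : ∫ x, L (f x) (-1) ∂μm
      = (πp * ∫ x, ℓ (f x) (-1) ∂μm - πm * ∫ x, ℓ (f x) 1 ∂μm) / (πp - πm) := by
    simp only [hL, neg_neg]
    rw [integral_div, integral_sub (hm2.const_mul _) (hm1.const_mul _),
      integral_const_mul, integral_const_mul]
  -- pair integrals
  have iS_Lt : ∫ p, (Lt (f p.1) + Lt (f p.2)) / 2 ∂μS
      = (πp ^ 2 / πS) * ∫ x, Lt (f x) ∂μp + (πm ^ 2 / πS) * ∫ x, Lt (f x) ∂μm := by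
    rw [hμS, mix_integral _ _ ENNReal.ofReal_ne_top ENNReal.ofReal_ne_top
        (pair_integrable hLtp hLtp) (pair_integrable hLtm hLtm),
      pair_integral_eq hLtp hLtp, pair_integral_eq hLtm hLtm,
      ENNReal.toReal_ofReal (by positivity), ENNReal.toReal_ofReal (by positivity)]
    ring
  have iD_Lt : ∫ p, (Lt (f p.1) + Lt (f p.2)) / 2 ∂μD
      = ((∫ x, Lt (f x) ∂μp) + ∫ x, Lt (f x) ∂μm) / 2 := by
    rw [hμD, mix_integral _ _ hhalf hhalf
        (pair_integrable hLtp hLtm) (pair_integrable hLtm hLtp),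
      pair_integral_eq hLtp hLtm, pair_integral_eq hLtm hLtp, hhalfR]
    ring
  have iS_L1 : ∫ p, (L (f p.1) 1 + L (f p.2) 1) / 2 ∂μS
      = (πp ^ 2 / πS) * ∫ x, L (f x) 1 ∂μp + (πm ^ 2 / πS) * ∫ x, L (f x) 1 ∂μm := by
    rw [hμS, mix_integral _ _ ENNReal.ofReal_ne_top ENNReal.ofReal_ne_top
        (pair_integrable hL1p hL1p) (pair_integrable hL1m hL1m),
      pair_integral_eq hL1p hL1p, pair_integral_eq hL1m hL1m,
      ENNReal.toReal_ofReal (by positivity), ENNReal.toReal_ofReal (by positivity)]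
    ring
  have iD_Lm1 : ∫ p, (L (f p.1) (-1) + L (f p.2) (-1)) / 2 ∂μD
      = ((∫ x, L (f x) (-1) ∂μp) + ∫ x, L (f x) (-1) ∂μm) / 2 := by
    rw [hμD, mix_integral _ _ hhalf hhalf
        (pair_integrable hLm1p hLm1m) (pair_integrable hLm1m hLm1p),
      pair_integral_eq hLm1p hLm1m, pair_integral_eq hLm1m hLm1p, hhalfR]
    ring
  -- μU integrals
  have iU_L1 : ∫ x, L (f x) 1 ∂μU
      = πp * ∫ x, L (f x) 1 ∂μp + πm * ∫ x, L (f x) 1 ∂μm := by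
    rw [hμU, mix_integral _ _ ENNReal.ofReal_ne_top ENNReal.ofReal_ne_top hL1p hL1m,
      ENNReal.toReal_ofReal hπp0.le, ENNReal.toReal_ofReal hπm0.le]
  have iU_Lm1 : ∫ x, L (f x) (-1) ∂μU
      = πp * ∫ x, L (f x) (-1) ∂μp + πm * ∫ x, L (f x) (-1) ∂μm := by
    rw [hμU, mix_integral _ _ ENNReal.ofReal_ne_top ENNReal.ofReal_ne_top hLm1p hLm1m,
      ENNReal.toReal_ofReal hπp0.le, ENNReal.toReal_ofReal hπm0.le]
  -- right-hand side integrals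
  have iptS : ∫ x, ((γ₁ + γ₃ * πp) * ℓ (f x) 1 - (γ₁ + γ₃ * πm) * ℓ (f x) (-1)) ∂ptS
      = (πp ^ 2 / πS) * ((γ₁ + γ₃ * πp) * ∫ x, ℓ (f x) 1 ∂μp
          - (γ₁ + γ₃ * πm) * ∫ x, ℓ (f x) (-1) ∂μp)
        + (πm ^ 2 / πS) * ((γ₁ + γ₃ * πp) * ∫ x, ℓ (f x) 1 ∂μm
          - (γ₁ + γ₃ * πm) * ∫ x, ℓ (f x) (-1) ∂μm) := by
    have h1 : Integrable (fun x => (γ₁ + γ₃ * πp) * ℓ (f x) 1 - (γ₁ + γ₃ * πm) * ℓ (f x) (-1)) μp :=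
      (hp1.const_mul _).sub (hp2.const_mul _)
    have h2 : Integrable (fun x => (γ₁ + γ₃ * πp) * ℓ (f x) 1 - (γ₁ + γ₃ * πm) * ℓ (f x) (-1)) μm :=
      (hm1.const_mul _).sub (hm2.const_mul _)
    rw [hptS, mix_integral _ _ ENNReal.ofReal_ne_top ENNReal.ofReal_ne_top h1 h2,
      ENNReal.toReal_ofReal (by positivity), ENNReal.toReal_ofReal (by positivity),
      integral_sub (hp1.const_mul _) (hp2.const_mul _),
      integral_sub (hm1.const_mul _) (hm2.const_mul _),
      integral_const_mul, integral_const_mul, integral_const_mul, integral_const_mul]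
  have iptD : ∫ x, (-(γ₂ + γ₃ * πm) * ℓ (f x) 1 + (γ₂ + γ₃ * πp) * ℓ (f x) (-1)) ∂ptD
      = (1 / 2) * (-(γ₂ + γ₃ * πm) * ∫ x, ℓ (f x) 1 ∂μp
          + (γ₂ + γ₃ * πp) * ∫ x, ℓ (f x) (-1) ∂μp)
        + (1 / 2) * (-(γ₂ + γ₃ * πm) * ∫ x, ℓ (f x) 1 ∂μm
          + (γ₂ + γ₃ * πp) * ∫ x, ℓ (f x) (-1) ∂μm) := by
    have h1 : Integrable (fun x => -(γ₂ + γ₃ * πm) * ℓ (f x) 1 + (γ₂ + γ₃ * πp) * ℓ (f x) (-1)) μp :=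
      (hp1.const_mul _).add (hp2.const_mul _)
    have h2 : Integrable (fun x => -(γ₂ + γ₃ * πm) * ℓ (f x) 1 + (γ₂ + γ₃ * πp) * ℓ (f x) (-1)) μm :=
      (hm1.const_mul _).add (hm2.const_mul _)
    rw [hptD, mix_integral _ _ hhalf hhalf h1 h2,
      hhalfR,
      integral_add (hp1.const_mul _) (hp2.const_mul _),
      integral_add (hm1.const_mul _) (hm2.const_mul _),
      integral_const_mul, integral_const_mul, integral_const_mul, integral_const_mul]
  have iU : ∫ x, ((γ₂ * πp - γ₁ * πm) * ℓ (f x) 1 + (γ₁ * πp - γ₂ * πm) * ℓ (f x) (-1)) ∂μU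
      = πp * ((γ₂ * πp - γ₁ * πm) * ∫ x, ℓ (f x) 1 ∂μp
          + (γ₁ * πp - γ₂ * πm) * ∫ x, ℓ (f x) (-1) ∂μp)
        + πm * ((γ₂ * πp - γ₁ * πm) * ∫ x, ℓ (f x) 1 ∂μm
          + (γ₁ * πp - γ₂ * πm) * ∫ x, ℓ (f x) (-1) ∂μm) := by
    have h1 : Integrable (fun x => (γ₂ * πp - γ₁ * πm) * ℓ (f x) 1 + (γ₁ * πp - γ₂ * πm) * ℓ (f x) (-1)) μp :=
      (hp1.const_mul _).add (hp2.const_mul _)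
    have h2 : Integrable (fun x => (γ₂ * πp - γ₁ * πm) * ℓ (f x) 1 + (γ₁ * πp - γ₂ * πm) * ℓ (f x) (-1)) μm :=
      (hm1.const_mul _).add (hm2.const_mul _)
    rw [hμU, mix_integral _ _ ENNReal.ofReal_ne_top ENNReal.ofReal_ne_top h1 h2,
      ENNReal.toReal_ofReal hπp0.le, ENNReal.toReal_ofReal hπm0.le,
      integral_add (hp1.const_mul _) (hp2.const_mul _),
      integral_add (hm1.const_mul _) (hm2.const_mul _),
      integral_const_mul, integral_const_mul, integral_const_mul, integral_const_mul]
  rw [hRSU f, hRDU f, hRSD f, integral_neg, iS_Lt, iD_Lt, iS_L1, iD_Lm1, iU_L1, iU_Lm1,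
    iLtp, iLtm, iL1p, iL1m, iLm1p, iLm1m, iptS, iptD, iU]
  have hπSne : πS ≠ 0 := ne_of_gt hπS0
  subst hπD hπS hπm
  field_simp
  ring
end

section
/- Class prior recovery from the similar proportion (Eq. (16)): 2·π_S − 1 = (2·π₊ − 1)² ≥ 0; moreover, if π₊ ≥ 1/2 then π₊ = (1 + √(2·π_S − 1))/2, and if π₊ < 1/2 then π₊ = (1 − √(2·π_S − 1))/2. -/
lemma two_mul_sq_add_one_sub_sq_sub_one (p : ℝ) :
    2 * (p ^ 2 + (1 - p) ^ 2) - 1 = (2 * p - 1) ^ 2 := by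
  ring

lemma eq_one_add_sqrt_sq_two_mul_sub_one_div_two {p : ℝ} (hp : 1 / 2 ≤ p) :
    p = (1 + √((2 * p - 1) ^ 2)) / 2 := by
  rw [Real.sqrt_sq (by linarith)]
  ring

lemma eq_one_sub_sqrt_sq_two_mul_sub_one_div_two {p : ℝ} (hp : p ≤ 1 / 2) :
    p = (1 - √((2 * p - 1) ^ 2)) / 2 := by
  rw [Real.sqrt_sq_eq_abs, abs_of_nonpos (by linarith)]
  ring

theorem class_prior_recovery_general
    (πp πm : ℝ) (hπm : πm = 1 - πp)
    (πS : ℝ) (hπS : πS = πp ^ 2 + πm ^ 2) :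
    2 * πS - 1 = (2 * πp - 1) ^ 2
      ∧ 0 ≤ 2 * πS - 1
      ∧ (1 / 2 ≤ πp → πp = (1 + Real.sqrt (2 * πS - 1)) / 2)
      ∧ (πp < 1 / 2 → πp = (1 - Real.sqrt (2 * πS - 1)) / 2) := by
  have hsq : 2 * πS - 1 = (2 * πp - 1) ^ 2 := by
    rw [hπS, hπm, two_mul_sq_add_one_sub_sq_sub_one]
  rw [hsq]
  exact ⟨rfl, sq_nonneg _, eq_one_add_sqrt_sq_two_mul_sub_one_div_two,
    fun h ↦ eq_one_sub_sqrt_sq_two_mul_sub_one_div_two h.le⟩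

/-- Class prior recovery from the similar proportion (Eq. (16)). -/
theorem class_prior_recovery
    (πp πm : ℝ) (hπp : πp ∈ Set.Icc (0 : ℝ) 1) (hπm : πm = 1 - πp)
    (πS : ℝ) (hπS : πS = πp ^ 2 + πm ^ 2) :
    2 * πS - 1 = (2 * πp - 1) ^ 2
      ∧ 0 ≤ 2 * πS - 1
      ∧ (1 / 2 ≤ πp → πp = (1 + Real.sqrt (2 * πS - 1)) / 2)
      ∧ (πp < 1 / 2 → πp = (1 - Real.sqrt (2 * πS - 1)) / 2) :=
  class_prior_recovery_general πp πm hπm πS hπS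
end
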